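/- Fix an integer N ≥ 1, a real σ > 0, and cost functions c_A, c_B : {0,…,N} → ℝ. Define g(m) = Φ_σ(c_B(N−m) − c_A(m)) for m ∈ {0,…,N} and f : [0,1] → [0,1] by f(x) = Σ_{m=0}^{N} g(m)·(N choose m)·x^m·(1−x)^{N−m}. Assume N·max_{0 ≤ m ≤ N−1} |g(m+1) − g(m)| < 1. Then f has a unique fixed point x* ∈ [0,1], and for every initial condition x_1 ∈ [0,1], the sequence defined by x_t = f(x_{t−1}) for t ≥ 2 converges to x* as t → ∞. -/

import Mathlib

open MeasureTheory ProbabilityTheory Finset Filter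

/-- `Phi σ x` is the cumulative distribution function of the Gaussian
distribution `N(0, σ²)` evaluated at `x`. -/
noncomputable def Phi (σ : ℝ) (x : ℝ) : ℝ :=
  ((gaussianReal 0 (Real.toNNReal (σ ^ 2))) (Set.Iic x)).toReal

/-!
The map `f` is the degree-`N` Bernstein polynomial with coefficients `g(m) ∈ [0, 1]`, so it maps
`[0, 1]` into itself. Its derivative is `N` times the degree-`(N - 1)` Bernstein polynomial of the
forward differences `g(m + 1) - g(m)`; since the Bernstein basis is a partition of unity on
`[0, 1]`, `|f'| ≤ N · max |g(m + 1) - g(m)| < 1` there. Hence `f` is a contraction of the complete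
space `[0, 1]` and the Banach fixed-point theorem applies.
-/

open Polynomial Set
open scoped NNReal Topology

theorem Phi_mem_Icc (σ x : ℝ) : Phi σ x ∈ Icc (0 : ℝ) 1 :=
  ⟨ENNReal.toReal_nonneg, ENNReal.toReal_le_of_le_ofReal zero_le_one (by simp [prob_le_one])⟩

theorem LipschitzOnWith.exists_fixedPoint_unique_tendsto_iterate {α : Type*}
    [MetricSpace α] {s : Set α} (hsc : IsComplete s) (hs : s.Nonempty) {K : ℝ≥0} (hK : K < 1)
    {f : α → α} (hsf : MapsTo f s s) (hf : LipschitzOnWith K f s) :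
    ∃ x ∈ s, f x = x ∧ (∀ y ∈ s, f y = y → y = x) ∧
      ∀ y ∈ s, Tendsto (fun t : ℕ => f^[t] y) atTop (𝓝 x) := by
  have := hsc.completeSpace_coe
  have := hs.to_subtype
  have hF : ContractingWith K (hsf.restrict f s s) := ⟨hK, hf.mapsToRestrict hsf⟩
  set x := ContractingWith.fixedPoint _ hF
  refine ⟨x, x.2, congrArg Subtype.val hF.fixedPoint_isFixedPt, fun y hy hfy => ?_, fun y hy => ?_⟩
  · exact congrArg Subtype.val (hF.fixedPoint_unique (x := ⟨y, hy⟩) (Subtype.ext hfy))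
  · simpa only [Function.comp_def, hsf.coe_iterate_restrict] using
      (continuous_subtype_val.tendsto x).comp (hF.tendsto_iterate_fixedPoint ⟨y, hy⟩)

namespace bernsteinPolynomial

theorem eval_eq (n ν : ℕ) (x : ℝ) :
    (bernsteinPolynomial ℝ n ν).eval x = n.choose ν * x ^ ν * (1 - x) ^ (n - ν) := by
  simp [bernsteinPolynomial]

theorem eval_nonneg (n ν : ℕ) {x : ℝ} (hx : x ∈ Icc (0 : ℝ) 1) :
    0 ≤ (bernsteinPolynomial ℝ n ν).eval x := by
  rw [eval_eq]
  exact mul_nonneg (mul_nonneg (Nat.cast_nonneg _) (pow_nonneg hx.1 _))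
    (pow_nonneg (sub_nonneg.2 hx.2) _)

theorem sum_eval (n : ℕ) (x : ℝ) :
    ∑ ν ∈ range (n + 1), (bernsteinPolynomial ℝ n ν).eval x = 1 := by
  rw [← eval_finsetSum, bernsteinPolynomial.sum, eval_one]

theorem derivative_sum_smul {R : Type*} [CommRing R] (n : ℕ) (a : ℕ → R) :
    derivative (∑ ν ∈ range (n + 2), a ν • bernsteinPolynomial R (n + 1) ν) =
      (n + 1 : R[X]) * ∑ ν ∈ range (n + 1), (a (ν + 1) - a ν) • bernsteinPolynomial R n ν := by
  have hlast : bernsteinPolynomial R n (n + 1) = 0 := eq_zero_of_lt R (Nat.lt_succ_self n)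
  rw [sum_range_succ', derivative_add, derivative_sum]
  simp only [derivative_smul, derivative_succ_aux, derivative_zero, smul_sub, sub_smul,
    sum_sub_distrib, mul_sub, mul_sum, mul_smul_comm]
  -- summation by parts: reindex the sum of the `a ν • B_{n, ν}` and drop `B_{n, n + 1} = 0`
  rw [sum_range_succ (fun ν => a (ν + 1) • ((n + 1 : R[X]) * bernsteinPolynomial R n (ν + 1))),
    sum_range_succ' (fun ν => a ν • ((n + 1 : R[X]) * bernsteinPolynomial R n ν)), hlast,
    mul_zero, smul_zero, Nat.add_sub_cancel, Nat.cast_succ, neg_mul, smul_neg]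
  abel

theorem abs_eval_sum_smul_le (n : ℕ) {a : ℕ → ℝ} {M : ℝ} (ha : ∀ ν ∈ range (n + 1), |a ν| ≤ M)
    {x : ℝ} (hx : x ∈ Icc (0 : ℝ) 1) :
    |(∑ ν ∈ range (n + 1), a ν • bernsteinPolynomial ℝ n ν).eval x| ≤ M := by
  simp only [eval_finsetSum, eval_smul, smul_eq_mul]
  calc |∑ ν ∈ range (n + 1), a ν * (bernsteinPolynomial ℝ n ν).eval x|
      ≤ ∑ ν ∈ range (n + 1), |a ν| * (bernsteinPolynomial ℝ n ν).eval x := by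
        refine (abs_sum_le_sum_abs _ _).trans_eq (sum_congr rfl fun ν _ => ?_)
        rw [abs_mul, abs_of_nonneg (eval_nonneg n ν hx)]
    _ ≤ ∑ ν ∈ range (n + 1), M * (bernsteinPolynomial ℝ n ν).eval x :=
        sum_le_sum fun ν hν => mul_le_mul_of_nonneg_right (ha ν hν) (eval_nonneg n ν hx)
    _ = M := by rw [← mul_sum, sum_eval, mul_one]

theorem eval_sum_smul_mem_Icc (n : ℕ) {a : ℕ → ℝ} (ha : ∀ ν, a ν ∈ Icc (0 : ℝ) 1)
    {x : ℝ} (hx : x ∈ Icc (0 : ℝ) 1) :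
    (∑ ν ∈ range (n + 1), a ν • bernsteinPolynomial ℝ n ν).eval x ∈ Icc (0 : ℝ) 1 := by
  simp only [eval_finsetSum, eval_smul, smul_eq_mul]
  refine ⟨sum_nonneg fun ν _ => mul_nonneg (ha ν).1 (eval_nonneg n ν hx), ?_⟩
  calc ∑ ν ∈ range (n + 1), a ν * (bernsteinPolynomial ℝ n ν).eval x
      ≤ ∑ ν ∈ range (n + 1), (bernsteinPolynomial ℝ n ν).eval x :=
        sum_le_sum fun ν _ => mul_le_of_le_one_left (eval_nonneg n ν hx) (ha ν).2
    _ = 1 := sum_eval n x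

theorem lipschitzOnWith_eval_sum_smul (n : ℕ) {a : ℕ → ℝ} {M : ℝ≥0}
    (ha : ∀ ν ∈ range (n + 1), |a (ν + 1) - a ν| ≤ M) :
    LipschitzOnWith ((n + 1) * M)
      (fun x => (∑ ν ∈ range (n + 2), a ν • bernsteinPolynomial ℝ (n + 1) ν).eval x)
      (Icc 0 1) := by
  refine (convex_Icc 0 1).lipschitzOnWith_of_nnnorm_deriv_le
    (fun x _ => Polynomial.differentiableAt _) fun x hx => ?_
  rw [← NNReal.coe_le_coe, coe_nnnorm, Polynomial.deriv, derivative_sum_smul, eval_mul, eval_add,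
    eval_natCast, eval_one, Real.norm_eq_abs, abs_mul, abs_of_nonneg (by positivity)]
  push_cast
  exact mul_le_mul_of_nonneg_left (abs_eval_sum_smul_le n ha hx) (by positivity)

end bernsteinPolynomial

theorem population_profile_convergence_general
    (N : ℕ) (hN : 1 ≤ N) (σ : ℝ)
    (cA cB : ℕ → ℝ)
    (g : ℕ → ℝ) (hg : ∀ m, g m = Phi σ (cB (N - m) - cA m))
    (f : ℝ → ℝ)
    (hf : ∀ y : ℝ, f y = ∑ m ∈ Finset.range (N + 1),
      g m * ((N.choose m : ℝ) * y ^ m * (1 - y) ^ (N - m)))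
    (hcontr :
      (N : ℝ) * ((Finset.range N).sup'
          (Finset.nonempty_range_iff.mpr (Nat.one_le_iff_ne_zero.mp hN))
          (fun m => |g (m + 1) - g m|)) < 1) :
    ∃ xstar ∈ Set.Icc (0 : ℝ) 1,
      f xstar = xstar ∧
      (∀ y ∈ Set.Icc (0 : ℝ) 1, f y = y → y = xstar) ∧
      ∀ x1 ∈ Set.Icc (0 : ℝ) 1,
        Tendsto (fun t : ℕ => f^[t] x1) atTop (nhds xstar) := by
  obtain ⟨n, rfl⟩ : ∃ n, N = n + 1 := ⟨N - 1, by omega⟩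
  set M := (range (n + 1)).sup' _ fun m => |g (m + 1) - g m|
  have hM : 0 ≤ M :=
    (abs_nonneg _).trans (le_sup' (fun m => |g (m + 1) - g m|) (mem_range.2 n.succ_pos))
  have hf_eq :
      f = fun y => (∑ m ∈ range (n + 2), g m • bernsteinPolynomial ℝ (n + 1) m).eval y := by
    funext y
    simp only [hf, eval_finsetSum, eval_smul, smul_eq_mul, bernsteinPolynomial.eval_eq]
  have hg_mem : ∀ m, g m ∈ Icc (0 : ℝ) 1 := fun m => hg m ▸ Phi_mem_Icc σ _
  have hlip : LipschitzOnWith ((n + 1) * M.toNNReal) f (Icc 0 1) := hf_eq ▸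
    bernsteinPolynomial.lipschitzOnWith_eval_sum_smul n fun ν hν =>
      (le_sup' (fun m => |g (m + 1) - g m|) hν).trans (Real.le_coe_toNNReal M)
  have hK : (n + 1) * M.toNNReal < 1 := by
    rw [← NNReal.coe_lt_coe]
    push_cast at hcontr ⊢
    rwa [Real.coe_toNNReal _ hM]
  exact hlip.exists_fixedPoint_unique_tendsto_iterate isClosed_Icc.isComplete
    (nonempty_Icc.2 zero_le_one) hK
    fun y hy => hf_eq ▸ bernsteinPolynomial.eval_sum_smul_mem_Icc _ hg_mem hy

/-- Convergence of the expected population profile under σ-scalar signalling: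
with `g(m) = Φ_σ(c_B(N−m) − c_A(m))` and
`f(x) = Σ_{m=0}^{N} g(m)·(N choose m)·x^m·(1−x)^{N−m}`, if
`N·max_{0 ≤ m ≤ N−1} |g(m+1) − g(m)| < 1` then `f` has a unique fixed point
`x* ∈ [0,1]` and the iterates `x_t = f(x_{t−1})` converge to `x*` from every
initial condition `x₁ ∈ [0,1]`. -/
theorem population_profile_convergence
    (N : ℕ) (hN : 1 ≤ N) (σ : ℝ) (hσ : 0 < σ)
    (cA cB : ℕ → ℝ)
    (g : ℕ → ℝ) (hg : ∀ m, g m = Phi σ (cB (N - m) - cA m))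
    (f : ℝ → ℝ)
    (hf : ∀ y : ℝ, f y = ∑ m ∈ Finset.range (N + 1),
      g m * ((N.choose m : ℝ) * y ^ m * (1 - y) ^ (N - m)))
    (hcontr :
      (N : ℝ) * ((Finset.range N).sup'
          (Finset.nonempty_range_iff.mpr (Nat.one_le_iff_ne_zero.mp hN))
          (fun m => |g (m + 1) - g m|)) < 1) :
    ∃ xstar ∈ Set.Icc (0 : ℝ) 1,
      f xstar = xstar ∧
      (∀ y ∈ Set.Icc (0 : ℝ) 1, f y = y → y = xstar) ∧
      ∀ x1 ∈ Set.Icc (0 : ℝ) 1,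
        Tendsto (fun t : ℕ => f^[t] x1) atTop (nhds xstar) :=
  population_profile_convergence_general N hN σ cA cB g hg f hf hcontr
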